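/- arXiv:0707.0046 — 2 statements merged into one kernel-verified Lean document; each statement's English description precedes it below -/
import Mathlib

section
/- Let M be a commutative additive monoid and R a reflexive, symmetric binary relation on M that is compatible with addition (R(a,b) and R(a',b') imply R(a+a', b+b')) and satisfies: R(a,b) and R(b,c) imply R(a+b, c+b). If a ∼ c in the equivalence relation generated by R, then there exists m ∈ M such that R(a+m, c+m). -/
/-!
Stabilised `R`-relatedness, `∃ m, R (a + m) (c + m)`, is an equivalence relation containing `R`,
hence it contains the equivalence relation generated by `R`. Reflexivity and symmetry come from
those of `R`. For transitivity, shift `R (x + m) (y + m)` and `R (y + n) (z + n)` to the common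
stabiliser `m + n`; the composition property then relates `x` and `z` after adding
`m + n + (y + m + n)`.
-/

namespace AddCommMonoid

variable {M : Type*} [AddCommMonoid M] (R : M → M → Prop)

def StablyRelated (a c : M) : Prop :=
  ∃ m : M, R (a + m) (c + m)

variable {R}

theorem rel_add_right (hrefl : ∀ a : M, R a a)
    (hadd : ∀ a b a' b' : M, R a b → R a' b' → R (a + a') (b + b'))
    {a b : M} (k : M) (hab : R a b) : R (a + k) (b + k) :=
  hadd _ _ _ _ hab (hrefl k)

theorem StablyRelated.of_rel {a c : M} (h : R a c) : StablyRelated R a c :=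
  ⟨0, by simpa using h⟩

theorem StablyRelated.trans (hrefl : ∀ a : M, R a a)
    (hadd : ∀ a b a' b' : M, R a b → R a' b' → R (a + a') (b + b'))
    (hcomp : ∀ a b c : M, R a b → R b c → R (a + b) (c + b))
    {x y z : M} : StablyRelated R x y → StablyRelated R y z → StablyRelated R x z := by
  rintro ⟨m, hxy⟩ ⟨n, hyz⟩
  have hxy' : R (x + m + n) (y + m + n) := rel_add_right hrefl hadd n hxy
  have hyz' : R (y + m + n) (z + m + n) := by
    simpa only [add_right_comm _ n m] using rel_add_right hrefl hadd m hyz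
  refine ⟨m + n + (y + m + n), ?_⟩
  simpa only [add_assoc] using hcomp _ _ _ hxy' hyz'

theorem stablyRelated_equivalence (hrefl : ∀ a : M, R a a) (hsymm : ∀ a b : M, R a b → R b a)
    (hadd : ∀ a b a' b' : M, R a b → R a' b' → R (a + a') (b + b'))
    (hcomp : ∀ a b c : M, R a b → R b c → R (a + b) (c + b)) :
    Equivalence (StablyRelated R) where
  refl _ := ⟨0, hrefl _⟩
  symm := fun ⟨m, h⟩ => ⟨m, hsymm _ _ h⟩
  trans := StablyRelated.trans hrefl hadd hcomp

end AddCommMonoid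

open AddCommMonoid in
/-- Two elements equivalent under the equivalence relation generated by a reflexive,
symmetric, addition-compatible relation `R` (with the composition property) become
`R`-related after adding a common element. -/
theorem eqvGen_implies_paired_after_stabilization
    {M : Type*} [AddCommMonoid M] (R : M → M → Prop)
    (hrefl : ∀ a : M, R a a)
    (hsymm : ∀ a b : M, R a b → R b a)
    (hadd : ∀ a b a' b' : M, R a b → R a' b' → R (a + a') (b + b'))
    (hcomp : ∀ a b c : M, R a b → R b c → R (a + b) (c + b))
    {a c : M} (h : Relation.EqvGen R a c) :
    ∃ m : M, R (a + m) (c + m) :=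
  (stablyRelated_equivalence hrefl hsymm hadd hcomp).eqvGen_iff.mp
    (Relation.EqvGen.eqvGen_mono (fun _ _ => StablyRelated.of_rel) _ _ h)
end

section
/- Abstract homotopy formula: Let h₀, h₁, ĥ₀, ĥ₁, Ω₀, Ω₁ be abelian groups together with homomorphisms a_j : Ω_j → ĥ_j, I_j : ĥ_j → h_j, R_j : ĥ_j → Ω_j (j = 0,1 standing for B and [0,1]×B), pullbacks i₀*, i₁* : ĥ₁ → ĥ₀ and ī₀*, ī₁* : Ω₁ → Ω₀, a map p* : ĥ₀ → ĥ₁ and p̄* : Ω₀ → Ω₁, and an integration ∫ : Ω₁ → Ω₀. Assume: (1) exactness: ker(I₁) = im(a₁); (2) for every x ∈ ĥ₁ there exists y ∈ ĥ₀ with I₁(x) = I₁(p* y); (3) i₁* p* = i₀* p* and ī₁* p̄* = ī₀* p̄* and ∫ ∘ p̄* = 0; (4) Stokes: for all ω ∈ Ω₁, ī₁*(ω) - ī₀*(ω) = ∫(R₁(a₁ ω)); (5) naturality: i_k* ∘ a₁ = a₀ ∘ ī_k* for k = 0,1; (6) R₁ is additive and R₁ ∘ p* factors as p̄* ∘ R₀.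 Then for every x ∈ ĥ₁: i₁*(x) - i₀*(x) = a₀(∫ R₁(x)). -/
/-- Abstract homotopy formula for smooth extensions of cohomology theories:
`i₁*(x) - i₀*(x) = a₀(∫ R₁(x))`. -/
theorem abstract_homotopy_formula
    {h0 h1 hh0 hh1 O0 O1 : Type*}
    [AddCommGroup h0] [AddCommGroup h1] [AddCommGroup hh0] [AddCommGroup hh1]
    [AddCommGroup O0] [AddCommGroup O1]
    (a0 : O0 →+ hh0) (a1 : O1 →+ hh1)
    (I0 : hh0 →+ h0) (I1 : hh1 →+ h1)
    (R0 : hh0 →+ O0) (R1 : hh1 →+ O1)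
    (i0s i1s : hh1 →+ hh0) (ib0 ib1 : O1 →+ O0)
    (ps : hh0 →+ hh1) (pbs : O0 →+ O1)
    (integ : O1 →+ O0)
    -- (1) exactness: ker I₁ = im a₁
    (hexact : ∀ x : hh1, I1 x = 0 ↔ ∃ ω : O1, a1 ω = x)
    -- (2) for every x there is y with I₁(x) = I₁(p* y)
    (hlift : ∀ x : hh1, ∃ y : hh0, I1 x = I1 (ps y))
    -- (3) homotopy invariance of pullbacks of p* and vanishing of ∫ ∘ p̄*
    (hpm : i1s.comp ps = i0s.comp ps)
    (hpmf : ib1.comp pbs = ib0.comp pbs)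
    (hint : integ.comp pbs = 0)
    -- (4) Stokes
    (hstokes : ∀ ω : O1, ib1 ω - ib0 ω = integ (R1 (a1 ω)))
    -- (5) naturality of a
    (hnat0 : ∀ ω : O1, i0s (a1 ω) = a0 (ib0 ω))
    (hnat1 : ∀ ω : O1, i1s (a1 ω) = a0 (ib1 ω))
    -- (6) R₁ ∘ p* = p̄* ∘ R₀
    (hR : R1.comp ps = pbs.comp R0) :
    ∀ x : hh1, i1s x - i0s x = a0 (integ (R1 x)) := by
  intro x
  obtain ⟨y, hy⟩ := hlift x
  have h0' : I1 (x - ps y) = 0 := by simp [map_sub, hy]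
  obtain ⟨ω, hω⟩ := (hexact _).mp h0'
  have hx : x = ps y + a1 ω := by rw [hω]; abel
  have hps : i1s (ps y) = i0s (ps y) := by
    have := congrArg (fun f => (f : hh0 →+ hh0) y) hpm
    simpa using this
  have hRps : R1 (ps y) = pbs (R0 y) := by
    have := congrArg (fun f => (f : hh0 →+ O1) y) hR
    simpa using this
  have hintps : integ (R1 (ps y)) = 0 := by
    rw [hRps]
    have := congrArg (fun f => (f : O0 →+ O0) (R0 y)) hint
    simpa using this
  calc i1s x - i0s x
      = (i1s (ps y) - i0s (ps y)) + (i1s (a1 ω) - i0s (a1 ω)) := by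
        rw [hx]; simp [map_add]; abel
    _ = a0 (ib1 ω) - a0 (ib0 ω) := by rw [hps, hnat0, hnat1]; abel
    _ = a0 (integ (R1 (a1 ω))) := by rw [← map_sub, ← hstokes]
    _ = a0 (integ (R1 x)) := by rw [hx]; simp [map_add, hintps]
end
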